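/- arXiv:1104.2137 — 7 statements merged into one kernel-verified Lean document; each statement's English description precedes it below -/
import Mathlib

section
/- For all integers k ≥ 2 and s ≥ 0, we have ∑_{h=2}^{k} (-1)^h C(k,h) ∑_{u=0}^{h-2} (-1)^u C(s,u) = C(s+k-1, s+1). -/
open Finset

lemma alt_sum (t : ℕ) : ∀ m : ℕ,
    ∑ u ∈ Finset.range (m + 1), (-1 : ℤ) ^ u * ((t + 1).choose u) =
      (-1) ^ m * (t.choose m) := by
  intro m
  induction m with
  | zero => simp
  | succ m ih =>
    rw [Finset.sum_range_succ, ih, Nat.choose_succ_succ' (t) (m)]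
    push_cast
    ring

lemma vand (k t : ℕ) (hk : 2 ≤ k) :
    ∑ h ∈ Finset.Icc 2 k, k.choose h * t.choose (h - 2) = (k + t).choose (t + 2) := by
  rw [show Finset.Icc 2 k = Finset.Ico 2 (k+1) by rw [Finset.Ico_add_one_right_eq_Icc],
    Finset.sum_Ico_eq_sum_range]
  have hL : ∑ i ∈ Finset.range (k + 1 - 2), k.choose (2 + i) * t.choose (2 + i - 2)
      = ∑ i ∈ Finset.range (k + t + 1), k.choose (i + 2) * t.choose i := by
    have e : ∀ i ∈ Finset.range (k + 1 - 2),
        k.choose (2 + i) * t.choose (2 + i - 2) = k.choose (i + 2) * t.choose i := by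
      intro i _
      rw [Nat.add_comm 2 i, Nat.add_sub_cancel]
    rw [Finset.sum_congr rfl e]
    apply Finset.sum_subset
    · intro x hx
      simp only [Finset.mem_range] at *
      omega
    · intro x _ hx
      simp only [Finset.mem_range] at hx
      have : k < x + 2 := by omega
      simp [Nat.choose_eq_zero_of_lt this]
  rw [hL]
  have hR : (k + t).choose (t + 2) = ∑ i ∈ Finset.range (t + 1), k.choose (i + 2) * t.choose i := by
    rw [Nat.add_choose_eq, Finset.Nat.sum_antidiagonal_eq_sum_range_succ_mk]
    simp only [Nat.succ_eq_add_one]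
    rw [show t + 2 + 1 = t + 1 + 1 + 1 from rfl, Finset.sum_range_succ', Finset.sum_range_succ']
    have z1 : t.choose (t + 2 - 0) = 0 := Nat.choose_eq_zero_of_lt (by omega)
    have z2 : t.choose (t + 2 - (0 + 1)) = 0 := Nat.choose_eq_zero_of_lt (by omega)
    rw [z1, z2, Nat.mul_zero, Nat.mul_zero, Nat.add_zero, Nat.add_zero]
    apply Finset.sum_congr rfl
    intro i hi
    simp only [Finset.mem_range] at hi
    have h3 : t + 2 - (i + 1 + 1) = t - i := by omega
    rw [h3, Nat.choose_symm (by omega : i ≤ t)]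
  rw [hR]
  symm
  apply Finset.sum_subset
  · intro x hx
    simp only [Finset.mem_range] at *
    omega
  · intro x _ hx
    simp only [Finset.mem_range] at hx
    have : t < x := by omega
    simp [Nat.choose_eq_zero_of_lt this]

theorem stmt_0 (k s : ℕ) (hk : 2 ≤ k) :
    ∑ h ∈ Finset.Icc 2 k, (-1 : ℤ) ^ h * (k.choose h) *
      ∑ u ∈ Finset.range (h - 1), (-1 : ℤ) ^ u * (s.choose u) =
    (s + k - 1).choose (s + 1) := by
  cases s with
  | zero =>
    have hinner : ∀ h ∈ Finset.Icc 2 k,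
        (-1 : ℤ) ^ h * (k.choose h) *
          ∑ u ∈ Finset.range (h - 1), (-1 : ℤ) ^ u * ((0:ℕ).choose u)
        = (-1 : ℤ) ^ h * (k.choose h) := by
      intro h hh
      simp only [Finset.mem_Icc] at hh
      have : ∑ u ∈ Finset.range (h - 1), (-1 : ℤ) ^ u * ((0:ℕ).choose u) = 1 := by
        obtain ⟨m, hm⟩ : ∃ m, h - 1 = m + 1 := ⟨h - 2, by omega⟩
        rw [hm, Finset.sum_range_succ']
        have : ∀ i ∈ Finset.range m, (-1 : ℤ) ^ (i+1) * ((0:ℕ).choose (i+1)) = 0 := by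
          intro i _; simp
        rw [Finset.sum_congr rfl this]; simp
      rw [this, mul_one]
    rw [Finset.sum_congr rfl hinner]
    have hfull := Int.alternating_sum_range_choose_of_ne (n := k) (by omega)
    have hins : Finset.range (k + 1) = insert 0 (insert 1 (Finset.Icc 2 k)) := by
      ext x; simp only [Finset.mem_range, Finset.mem_insert, Finset.mem_Icc]; omega
    rw [hins, Finset.sum_insert (by simp), Finset.sum_insert (by simp)] at hfull
    simp only [pow_zero, pow_one, Nat.choose_zero_right, Nat.choose_one_right,
      Nat.cast_one, one_mul] at hfull
    have : ∑ h ∈ Finset.Icc 2 k, (-1 : ℤ) ^ h * (k.choose h) = (k : ℤ) - 1 := by linarith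
    rw [this]
    have : (0 + k - 1).choose (0 + 1) = k - 1 := by
      simp [Nat.choose_one_right]
    rw [this]
    have : (1:ℕ) ≤ k := by omega
    push_cast [this]
    ring
  | succ t =>
    have hterm : ∀ h ∈ Finset.Icc 2 k,
        (-1 : ℤ) ^ h * (k.choose h) *
          ∑ u ∈ Finset.range (h - 1), (-1 : ℤ) ^ u * ((t+1).choose u)
        = ((k.choose h * t.choose (h - 2) : ℕ) : ℤ) := by
      intro h hh
      simp only [Finset.mem_Icc] at hh
      obtain ⟨m, rfl⟩ : ∃ m, h = m + 2 := ⟨h - 2, by omega⟩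
      have : m + 2 - 1 = m + 1 := rfl
      rw [this, alt_sum t m]
      have h2 : m + 2 - 2 = m := rfl
      rw [h2]
      have hs : ((-1:ℤ)^(m+2)) * ((-1:ℤ)^m) = 1 := by
        rw [← pow_add, show m+2+m = 2*(m+1) by ring, pow_mul]; norm_num
      push_cast
      linear_combination ((k.choose (m+2) : ℤ) * (t.choose m)) * hs
    rw [Finset.sum_congr rfl hterm, ← Nat.cast_sum, vand k t hk]
    congr 2
    omega
end

section
/- Define A(k,s) := ∑_{h=2}^{k} ∑_{u=0}^{min(h-2,s)} (h-u-1) C(k,h) C(s,u) (-1)^{k-h+s-u} · (-1)^{k+s}. Then for all integers k ≥ 2 and s ≥ 0, A(k,s) = C(s+k-2, s). -/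
open Finset

lemma lemP (n j : ℕ) :
    ∑ h ∈ range (j + 1), (-1 : ℤ) ^ h * ((n + 1).choose h) = (-1) ^ j * n.choose j := by
  induction j with
  | zero => simp
  | succ j ih =>
      rw [sum_range_succ, ih, Nat.choose_succ_succ]
      push_cast [pow_succ]
      ring

lemma lemM (m : ℕ) (hm : 1 ≤ m) :
    ∑ h ∈ range (m + 2), (h : ℤ) * (-1) ^ h * (m + 1).choose h = 0 := by
  rw [sum_range_succ']
  have e : ∀ i : ℕ, ((i : ℤ) + 1) * (-1) ^ (i + 1) * (m + 1).choose (i + 1)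
      = -((m : ℤ) + 1) * ((-1) ^ i * (m.choose i)) := by
    intro i
    have h := Nat.add_one_mul_choose_eq m i
    have h' : ((m : ℤ) + 1) * m.choose i = (m + 1).choose (i + 1) * ((i : ℤ) + 1) := by
      exact_mod_cast congrArg (fun x : ℕ => (x : ℤ)) h
    rw [pow_succ]
    linear_combination ((-1:ℤ)^i) * h'
  push_cast
  rw [sum_congr rfl fun i _ => e i, ← mul_sum,
    Int.alternating_sum_range_choose_of_ne (by omega : m ≠ 0)]
  simp

lemma lemQ (n u : ℕ) :
    ∑ h ∈ range (u + 1), ((u : ℤ) + 1 - h) * (-1) ^ h * (n + 2).choose h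
      = (-1) ^ u * n.choose u := by
  induction u with
  | zero => simp
  | succ u ih =>
      have e : ∀ h : ℕ, ((u : ℤ) + 1 + 1 - h) * (-1) ^ h * (n + 2).choose h
          = ((u : ℤ) + 1 - h) * (-1) ^ h * (n + 2).choose h
            + (-1) ^ h * (n + 2).choose h := by intro h; ring
      push_cast
      rw [sum_congr rfl fun h _ => e h, sum_add_distrib, sum_range_succ _ (u + 1),
        lemP (n + 1) (u + 1), ih]
      have : ((u : ℤ) + 1 - (↑(u + 1) : ℕ)) = 0 := by push_cast; ring
      rw [this]
      rw [Nat.choose_succ_succ n u]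
      push_cast [pow_succ]
      ring

lemma lemL (k u : ℕ) (hku : u + 2 ≤ k) :
    ∑ h ∈ Icc (u + 2) k, ((h : ℤ) - u - 1) * k.choose h * (-1) ^ h
      = (-1) ^ u * (k - 2).choose u := by
  obtain ⟨n, rfl⟩ : ∃ n, k = n + 2 := ⟨k - 2, by omega⟩
  have hicc : Icc (u + 2) (n + 2) = Ico (u + 2) (n + 2 + 1) := by
    rw [Finset.Ico_add_one_right_eq_Icc]
  have hsplit := sum_Ico_consecutive (fun h => ((h : ℤ) - u - 1) * (n + 2).choose h * (-1) ^ h)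
      (by omega : 0 ≤ u + 2) (by omega : u + 2 ≤ n + 2 + 1)
  have htotal : ∑ h ∈ Ico 0 (n + 2 + 1), ((h : ℤ) - u - 1) * (n + 2).choose h * (-1) ^ h
      = 0 := by
    rw [← range_eq_Ico]
    have e : ∀ h : ℕ, ((h : ℤ) - u - 1) * (n + 2).choose h * (-1) ^ h
        = (h : ℤ) * (-1) ^ h * (n + 2).choose h
          - ((u : ℤ) + 1) * ((-1) ^ h * (n + 2).choose h) := by intro h; ring
    rw [sum_congr rfl fun h _ => e h, sum_sub_distrib, ← mul_sum,
      lemM (n + 1) (by omega), Int.alternating_sum_range_choose_of_ne (by omega : n + 2 ≠ 0)]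
    simp
  have hhead : ∑ h ∈ Ico 0 (u + 2), ((h : ℤ) - u - 1) * (n + 2).choose h * (-1) ^ h
      = -((-1) ^ u * n.choose u) := by
    rw [← range_eq_Ico]
    have e : ∀ h : ℕ, ((h : ℤ) - u - 1) * (n + 2).choose h * (-1) ^ h
        = -(((u : ℤ) + 1 - h) * (-1) ^ h * (n + 2).choose h) := by intro h; ring
    rw [sum_congr rfl fun h _ => e h, sum_neg_distrib, sum_range_succ, lemQ n u]
    have : ((u : ℤ) + 1 - (↑(u + 1) : ℕ)) = 0 := by push_cast; ring
    rw [this]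
    ring
  have : (n + 2 - 2 : ℕ) = n := by omega
  rw [hicc, this]
  have := hsplit
  rw [htotal, hhead] at this
  linarith [this]

lemma lemV (s n : ℕ) :
    ∑ u ∈ range (min n s + 1), s.choose u * n.choose u = (s + n).choose s := by
  have h1 : (s + n).choose s = (s + n).choose n := by
    have h := Nat.choose_symm (Nat.le_add_left n s)
    simpa using h
  rw [h1, Nat.add_choose_eq, Finset.Nat.sum_antidiagonal_eq_sum_range_succ_mk]
  have e : ∀ i ∈ range (n + 1), s.choose i * n.choose (n - i) = s.choose i * n.choose i := by
    intro i hi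
    rw [Nat.choose_symm (by simp at hi; omega)]
  rw [sum_congr rfl e]
  apply sum_subset
  · intro x hx
    simp only [mem_range] at hx ⊢
    omega
  · intro x hx1 hx2
    simp only [mem_range] at hx1 hx2
    have : s < x := by omega
    rw [Nat.choose_eq_zero_of_lt this, zero_mul]

theorem stmt_2 (k s : ℕ) (hk : 2 ≤ k) :
    (∑ h ∈ Finset.Icc 2 k, ∑ u ∈ Finset.range (min (h - 2) s + 1),
        ((h : ℤ) - u - 1) * (k.choose h) * (s.choose u) * (-1 : ℤ) ^ (k - h + (s - u)))
      * (-1 : ℤ) ^ (k + s) =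
    (s + k - 2).choose s := by
  obtain ⟨n, rfl⟩ : ∃ n, k = n + 2 := ⟨k - 2, by omega⟩
  have step1 : (∑ h ∈ Icc 2 (n + 2), ∑ u ∈ range (min (h - 2) s + 1),
        ((h : ℤ) - u - 1) * ((n + 2).choose h) * (s.choose u) * (-1 : ℤ) ^ (n + 2 - h + (s - u)))
      * (-1 : ℤ) ^ (n + 2 + s)
      = ∑ h ∈ Icc 2 (n + 2), ∑ u ∈ range (min (h - 2) s + 1),
        ((h : ℤ) - u - 1) * ((n + 2).choose h) * (s.choose u) * (-1 : ℤ) ^ (h + u) := by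
    rw [sum_mul]
    refine sum_congr rfl fun h hh => ?_
    rw [sum_mul]
    refine sum_congr rfl fun u hu => ?_
    have hhk : h ≤ n + 2 := (mem_Icc.mp hh).2
    have hus : u ≤ s := by
      have := mem_range.mp hu; omega
    have key : (n + 2 - h + (s - u)) + (n + 2 + s)
        = (h + u) + 2 * ((n + 2 - h) + (s - u)) := by omega
    rw [mul_assoc, ← pow_add, key, pow_add, pow_mul, neg_one_sq, one_pow, mul_one]
  rw [step1]
  rw [sum_comm' (s := Icc 2 (n + 2)) (t := fun h => range (min (h - 2) s + 1))
      (t' := range (min n s + 1)) (s' := fun u => Icc (u + 2) (n + 2))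
      (fun h u => by simp only [mem_Icc, mem_range]; omega)]
  have inner : ∀ u ∈ range (min n s + 1),
      ∑ h ∈ Icc (u + 2) (n + 2),
        ((h : ℤ) - u - 1) * ((n + 2).choose h) * (s.choose u) * (-1 : ℤ) ^ (h + u)
      = (s.choose u : ℤ) * (n.choose u) := by
    intro u hu
    have huk : u + 2 ≤ n + 2 := by have := mem_range.mp hu; omega
    have e : ∀ h : ℕ, ((h : ℤ) - u - 1) * ((n + 2).choose h) * (s.choose u) * (-1 : ℤ) ^ (h + u)
        = (s.choose u : ℤ) * (-1) ^ u * (((h : ℤ) - u - 1) * ((n + 2).choose h) * (-1) ^ h) := by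
      intro h; rw [pow_add]; ring
    rw [sum_congr rfl fun h _ => e h, ← mul_sum, lemL (n + 2) u huk]
    have h2 : (n + 2 - 2 : ℕ) = n := by omega
    rw [h2]
    have : (-1 : ℤ) ^ u * ((-1) ^ u * (n.choose u)) = (n.choose u : ℤ) := by
      rw [← mul_assoc, ← pow_add, ← two_mul, pow_mul, neg_one_sq, one_pow, one_mul]
    rw [mul_assoc, this]
  rw [sum_congr rfl inner]
  have h3 : (s + (n + 2) - 2 : ℕ) = s + n := by omega
  rw [h3, ← lemV s n]
  push_cast
  rfl
end

section
/- For p₁ ≥ p₂ ≥ p₃ > 0 with p₁+p₂+p₃ = 1, we have (1/3)(p₁−p₃)(p₂−p₃) < 1/12, and the supremum of (1/3)(p₁−p₃)(p₂−p₃) over all such triples equals 1/12. -/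
theorem stmt_4 :
    (∀ p₁ p₂ p₃ : ℝ, p₁ ≥ p₂ → p₂ ≥ p₃ → p₃ > 0 → p₁ + p₂ + p₃ = 1 →
      (1 / 3) * (p₁ - p₃) * (p₂ - p₃) < 1 / 12) ∧
    IsLUB {q : ℝ | ∃ p₁ p₂ p₃ : ℝ, p₁ ≥ p₂ ∧ p₂ ≥ p₃ ∧ p₃ > 0 ∧ p₁ + p₂ + p₃ = 1 ∧
      q = (1 / 3) * (p₁ - p₃) * (p₂ - p₃)} (1 / 12) := by
  have bound : ∀ p₁ p₂ p₃ : ℝ, p₁ ≥ p₂ → p₂ ≥ p₃ → p₃ > 0 → p₁ + p₂ + p₃ = 1 →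
      (1 / 3) * (p₁ - p₃) * (p₂ - p₃) < 1 / 12 := by
    intro p₁ p₂ p₃ h1 h2 h3 h4
    nlinarith [sq_nonneg (p₁ - p₂), sq_nonneg (p₁ + p₂ - 2*p₃), mul_pos h3 h3,
      mul_nonneg (sub_nonneg.2 (h1.trans' h2 : p₃ ≤ p₁)) h3.le]
  refine ⟨bound, ?_, ?_⟩
  · rintro q ⟨p₁, p₂, p₃, h1, h2, h3, h4, rfl⟩
    exact (bound p₁ p₂ p₃ h1 h2 h3 h4).le
  · intro b hb
    have key : ∀ ε ∈ Set.Ioo (0:ℝ) (1/3),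
        (fun ε : ℝ => (1/3) * ((1-ε)/2 - ε) * ((1-ε)/2 - ε)) ε ≤ b := by
      rintro ε ⟨h0, h1⟩
      apply hb
      exact ⟨(1-ε)/2, (1-ε)/2, ε, le_refl _, by linarith, h0, by ring, by ring⟩
    have hcont : Continuous fun ε : ℝ => (1/3) * ((1-ε)/2 - ε) * ((1-ε)/2 - ε) := by
      continuity
    have ht : Filter.Tendsto (fun ε : ℝ => (1/3) * ((1-ε)/2 - ε) * ((1-ε)/2 - ε))
        (nhdsWithin 0 (Set.Ioi 0)) (nhds (1/12)) := by
      have h0 : (1/3 : ℝ) * ((1-0)/2 - 0) * ((1-0)/2 - 0) = 1/12 := by norm_num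
      exact h0 ▸ (hcont.tendsto 0).mono_left nhdsWithin_le_nhds
    refine le_of_tendsto ht ?_
    filter_upwards [Ioo_mem_nhdsGT_of_mem (by norm_num : (0:ℝ) ∈ Set.Ico 0 (1/3))] with ε hε
    exact key ε hε
end

section
/- Let S⁻ = ∑_{j∈J⁻} Iⱼ and S⁺ = ∑_{j∈J⁺} Iⱼ be sums of independent Bernoulli random variables (J⁻, J⁺ disjoint finite index sets, Iⱼ ~ Be(rⱼ) with rⱼ ∈ [0,1]). Then E[(S⁻ − S⁺ − 1)₊] ≥ P(S⁻ = 0) − 1 + ∑_{j∈J⁻} rⱼ − ∑_{j∈J⁺} rⱼ, i.e., E[(S⁻ − S⁺ − 1)₊] ≥ ∏_{j∈J⁻}(1−rⱼ) − 1 + ∑_{j∈J⁻} rⱼ − ∑_{j∈J⁺} rⱼ. -/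
/-!
Pointwise `(S⁻ - S⁺ - 1)₊ ≥ (S⁻ - 1)₊ - S⁺` since `S⁺ ≥ 0`, and for the integer-valued `S⁻`
one has `(S⁻ - 1)₊ = S⁻ - 1 + 1{S⁻ = 0}`. Taking expectations with `E[Iⱼ] = rⱼ` leaves
`P(S⁻ = 0)`, which by independence is `∏ⱼ P(Iⱼ = 0) = ∏ⱼ (1 - rⱼ)`.
-/

open MeasureTheory ProbabilityTheory

lemma max_sub_zero_sub_le {α : Type*} [AddCommGroup α] [LinearOrder α] [IsOrderedAddMonoid α]
    (a c : α) {b : α} (hb : 0 ≤ b) : max (a - c) 0 - b ≤ max (a - b - c) 0 := by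
  rw [sub_le_iff_le_add]
  refine max_le ?_ ?_
  · calc a - c = (a - b - c) + b := by abel
      _ ≤ max (a - b - c) 0 + b := add_le_add_left (le_max_left _ _) b
  · exact (le_max_right _ _).trans (le_add_of_nonneg_right hb)

lemma max_natCast_sub_one_zero {R : Type*} [Ring R] [LinearOrder R] [IsStrictOrderedRing R]
    (n : ℕ) : max ((n : R) - 1) 0 = n - 1 + if n = 0 then 1 else 0 := by
  rcases n with _ | n <;> simp

section

variable {Ω : Type*} [MeasurableSpace Ω] {μ : Measure Ω}

lemma integrable_natCast_of_le [IsFiniteMeasure μ] {X : Ω → ℕ} (hX : Measurable X) {C : ℕ}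
    (hle : ∀ ω, X ω ≤ C) : Integrable (fun ω => (X ω : ℝ)) μ :=
  .of_bound (measurable_from_top.comp hX).aestronglyMeasurable C
    (ae_of_all _ fun ω => by simpa using hle ω)

lemma integral_natCast_of_le_one [IsFiniteMeasure μ] {X : Ω → ℕ} (hX : Measurable X)
    (hle : ∀ ω, X ω ≤ 1) : ∫ ω, (X ω : ℝ) ∂μ = μ.real {ω | X ω = 1} := by
  have hX_eq : (fun ω => (X ω : ℝ)) = {ω | X ω = 1}.indicator 1 := by
    ext ω
    rcases Nat.le_one_iff_eq_zero_or_eq_one.1 (hle ω) with h | h <;> simp [h]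
  have hone : MeasurableSet {ω | X ω = 1} := hX (measurableSet_singleton 1)
  rw [hX_eq, integral_indicator_one hone]

lemma integral_sum_natCast_of_le_one [IsFiniteMeasure μ] {ι : Type*} {X : ι → Ω → ℕ}
    (hmeas : ∀ j, Measurable (X j)) (hle : ∀ j ω, X j ω ≤ 1) (J : Finset ι) :
    ∫ ω, ∑ j ∈ J, (X j ω : ℝ) ∂μ = ∑ j ∈ J, μ.real {ω | X j ω = 1} := by
  rw [integral_finsetSum J fun j _ => integrable_natCast_of_le (hmeas j) (hle j)]
  exact Finset.sum_congr rfl fun j _ => integral_natCast_of_le_one (hmeas j) (hle j)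

lemma measureReal_eq_zero_of_le_one [IsProbabilityMeasure μ] {X : Ω → ℕ} (hX : Measurable X)
    (hle : ∀ ω, X ω ≤ 1) : μ.real {ω | X ω = 0} = 1 - μ.real {ω | X ω = 1} := by
  have hcompl : {ω | X ω = 0} = {ω | X ω = 1}ᶜ := by
    ext ω
    have := hle ω
    change X ω = 0 ↔ ¬X ω = 1
    omega
  have hone : MeasurableSet {ω | X ω = 1} := hX (measurableSet_singleton 1)
  rw [hcompl, probReal_compl_eq_one_sub hone]

lemma integral_max_natCast_sub_one_zero [IsProbabilityMeasure μ] {S : Ω → ℕ} (hS : Measurable S)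
    (hint : Integrable (fun ω => (S ω : ℝ)) μ) :
    ∫ ω, max ((S ω : ℝ) - 1) 0 ∂μ = ∫ ω, (S ω : ℝ) ∂μ - 1 + μ.real {ω | S ω = 0} := by
  have hzero : MeasurableSet {ω | S ω = 0} := hS (measurableSet_singleton 0)
  have hind : Integrable ({ω | S ω = 0}.indicator (1 : Ω → ℝ)) μ :=
    (integrable_indicator_iff hzero).2 (integrable_const 1).integrableOn
  have hsub : Integrable (fun ω => (S ω : ℝ) - 1) μ := hint.sub (integrable_const 1)
  have hpt : (fun ω => max ((S ω : ℝ) - 1) 0)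
      = fun ω => (S ω : ℝ) - 1 + {ω | S ω = 0}.indicator 1 ω := by
    ext ω
    rw [max_natCast_sub_one_zero, Set.indicator_apply]
    rfl
  rw [hpt, integral_add hsub hind, integral_sub hint (integrable_const 1),
    integral_indicator_one hzero]
  simp

lemma ProbabilityTheory.iIndepFun.measureReal_forall_mem {ι β : Type*} [MeasurableSpace β]
    {X : ι → Ω → β} (hX : iIndepFun X μ) (J : Finset ι) {s : Set β} (hs : MeasurableSet s) :
    μ.real {ω | ∀ j ∈ J, X j ω ∈ s} = ∏ j ∈ J, μ.real (X j ⁻¹' s) := by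
  have h : {ω | ∀ j ∈ J, X j ω ∈ s} = ⋂ j ∈ J, X j ⁻¹' s := by ext; simp
  rw [h, measureReal_def, hX.meas_biInter fun j _ => ⟨s, hs, rfl⟩, ENNReal.toReal_prod]
  rfl

lemma ProbabilityTheory.iIndepFun.measureReal_sum_eq_zero [IsProbabilityMeasure μ] {ι : Type*}
    {X : ι → Ω → ℕ} (hX : iIndepFun X μ) (hmeas : ∀ j, Measurable (X j))
    (hle : ∀ j ω, X j ω ≤ 1) (J : Finset ι) :
    μ.real {ω | ∑ j ∈ J, X j ω = 0} = ∏ j ∈ J, (1 - μ.real {ω | X j ω = 1}) := by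
  simp only [Finset.sum_eq_zero_iff]
  refine (hX.measureReal_forall_mem J (measurableSet_singleton 0)).trans
    (Finset.prod_congr rfl fun j _ => ?_)
  exact measureReal_eq_zero_of_le_one (hmeas j) (hle j)

end

theorem stmt_6_general (Ω : Type*) [MeasurableSpace Ω] (μ : Measure Ω) [IsProbabilityMeasure μ]
    (ι : Type*) (Jm Jp : Finset ι)
    (r : ι → ℝ) (hr : ∀ j, 0 ≤ r j ∧ r j ≤ 1)
    (I : ι → Ω → ℕ) (hmeas : ∀ j, Measurable (I j))
    (hval : ∀ j ω, I j ω ≤ 1)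
    (hdist : ∀ j, μ {ω | I j ω = 1} = ENNReal.ofReal (r j))
    (hind : iIndepFun I μ) :
    (∫ ω, max ((∑ j ∈ Jm, (I j ω : ℝ)) - (∑ j ∈ Jp, (I j ω : ℝ)) - 1) 0 ∂μ) ≥
      (∏ j ∈ Jm, (1 - r j)) - 1 + (∑ j ∈ Jm, r j) - (∑ j ∈ Jp, r j) := by
  have hprob (j : ι) : μ.real {ω | I j ω = 1} = r j := by
    rw [measureReal_def, hdist j, ENNReal.toReal_ofReal (hr j).1]
  have hint (J : Finset ι) : Integrable (fun ω => ∑ j ∈ J, (I j ω : ℝ)) μ :=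
    integrable_finsetSum J fun j _ => integrable_natCast_of_le (hmeas j) (hval j)
  have hmean (J : Finset ι) : ∫ ω, ∑ j ∈ J, (I j ω : ℝ) ∂μ = ∑ j ∈ J, r j := by
    simp only [integral_sum_natCast_of_le_one hmeas hval, hprob]
  set Sm : Ω → ℕ := fun ω => ∑ j ∈ Jm, I j ω with hSm
  have hSm_meas : Measurable Sm := Finset.measurable_sum Jm fun j _ => hmeas j
  have hSm_cast : (fun ω => (Sm ω : ℝ)) = fun ω => ∑ j ∈ Jm, (I j ω : ℝ) := by
    ext ω; exact Nat.cast_sum _ _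
  have hSm_int : Integrable (fun ω => (Sm ω : ℝ)) μ := hSm_cast ▸ hint Jm
  have hSm_pos : Integrable (fun ω => max ((Sm ω : ℝ) - 1) 0) μ :=
    (hSm_int.sub (integrable_const 1)).pos_part
  have hSm_zero : μ.real {ω | Sm ω = 0} = ∏ j ∈ Jm, (1 - r j) := by
    simp only [hSm, hind.measureReal_sum_eq_zero hmeas hval, hprob]
  calc (∏ j ∈ Jm, (1 - r j)) - 1 + (∑ j ∈ Jm, r j) - (∑ j ∈ Jp, r j)
      = ∫ ω, (max ((Sm ω : ℝ) - 1) 0 - ∑ j ∈ Jp, (I j ω : ℝ)) ∂μ := by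
        rw [integral_sub hSm_pos (hint Jp),
          integral_max_natCast_sub_one_zero hSm_meas hSm_int, hSm_cast, hmean, hmean, hSm_zero]
        ring
    _ ≤ ∫ ω, max ((∑ j ∈ Jm, (I j ω : ℝ)) - (∑ j ∈ Jp, (I j ω : ℝ)) - 1) 0 ∂μ := by
        refine integral_mono (hSm_pos.sub (hint Jp))
          (((hint Jm).sub (hint Jp)).sub (integrable_const 1)).pos_part fun ω => ?_
        exact congrFun hSm_cast ω ▸
          max_sub_zero_sub_le _ 1 (Finset.sum_nonneg fun j _ => Nat.cast_nonneg (I j ω))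

theorem stmt_6 (Ω : Type*) [MeasurableSpace Ω] (μ : Measure Ω) [IsProbabilityMeasure μ]
    (ι : Type*) (Jm Jp : Finset ι) (hdisj : Disjoint Jm Jp)
    (r : ι → ℝ) (hr : ∀ j, 0 ≤ r j ∧ r j ≤ 1)
    (I : ι → Ω → ℕ) (hmeas : ∀ j, Measurable (I j))
    (hval : ∀ j ω, I j ω ≤ 1)
    (hdist : ∀ j, μ {ω | I j ω = 1} = ENNReal.ofReal (r j))
    (hind : iIndepFun I μ) :
    (∫ ω, max ((∑ j ∈ Jm, (I j ω : ℝ)) - (∑ j ∈ Jp, (I j ω : ℝ)) - 1) 0 ∂μ) ≥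
      (∏ j ∈ Jm, (1 - r j)) - 1 + (∑ j ∈ Jm, r j) - (∑ j ∈ Jp, r j) :=
  stmt_6_general Ω μ ι Jm Jp r hr I hmeas hval hdist hind
end

section
/- For real a > 0 and reals α₁,...,αₘ > 0, the Dirichlet integral holds: ∫_{Δₐᵐ} x₁^{α₁−1} ⋯ xₘ^{αₘ−1} dx₁⋯dx_{m−1} = a^{α₁+⋯+αₘ−1} · ∏ᵢ Γ(αᵢ) / Γ(∑ᵢ αᵢ), where Δₐᵐ = {(x₁,...,xₘ) ∈ [0,∞)ᵐ : ∑ xᵢ = a} and the integration is over (x₁,...,x_{m−1}) ∈ {x ∈ [0,∞)^{m−1} : ∑ xᵢ ≤ a} with xₘ = a − ∑_{i<m} xᵢ. -/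
/-!
Induct on the dimension by integrating out the first coordinate `t`. The slice of the solid
simplex of size `a` at height `t` is the solid simplex of size `a - t` in one dimension less,
and the integrand factors as `t ^ (α₀ - 1)` times the Dirichlet density there, so the induction
hypothesis turns the inner integral into `(a - t) ^ (q - 1)` times a constant, where
`q = α₁ + ⋯ + αₘ`. With `p = α₀`, the outer integral is then the scaled Beta integral
`∫₀ᵃ t ^ (p - 1) (a - t) ^ (q - 1) dt = a ^ (p + q - 1) B(p, q)`. The induction runs on lower
Lebesgue integrals, where Tonelli needs no integrability hypotheses.
-/

open MeasureTheory Set ProbabilityTheory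
open scoped ENNReal

def solidSimplex (n : ℕ) (a : ℝ) : Set (Fin n → ℝ) := {x | (∀ i, 0 ≤ x i) ∧ ∑ i, x i ≤ a}

noncomputable def dirichletDensity {n : ℕ} (a : ℝ) (α : Fin (n + 1) → ℝ) (x : Fin n → ℝ) : ℝ :=
  (∏ i : Fin n, x i ^ (α i.castSucc - 1)) * (a - ∑ i, x i) ^ (α (Fin.last n) - 1)

theorem intervalIntegral_rpow_mul_rpow_sub {p q a : ℝ} (hp : 0 < p) (hq : 0 < q) (ha : 0 < a) :
    ∫ t in 0..a, t ^ (p - 1) * (a - t) ^ (q - 1) = a ^ (p + q - 1) * beta p q := by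
  calc ∫ t in 0..a, t ^ (p - 1) * (a - t) ^ (q - 1)
      = (∫ t in 0..a, ((t ^ (p - 1) * (a - t) ^ (q - 1) : ℝ) : ℂ)).re := by
        rw [intervalIntegral.integral_ofReal, Complex.ofReal_re]
    _ = (∫ t in 0..a, (t : ℂ) ^ ((p : ℂ) - 1) * ((a : ℂ) - t) ^ ((q : ℂ) - 1)).re := by
        congr 1
        refine intervalIntegral.integral_congr fun t ht => ?_
        rw [uIcc_of_le ha.le] at ht
        push_cast
        rw [Complex.ofReal_cpow ht.1, Complex.ofReal_cpow (sub_nonneg.2 ht.2)]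
        push_cast
        ring
    _ = a ^ (p + q - 1) * beta p q := by
        rw [Complex.betaIntegral_scaled _ _ ha, ← Complex.ofReal_one, ← Complex.ofReal_add,
          ← Complex.ofReal_sub, ← Complex.ofReal_cpow ha.le, Complex.re_ofReal_mul,
          beta_eq_betaIntegralReal p q hp hq]

theorem setLIntegral_Ioo_rpow_mul_rpow_sub {p q a : ℝ} (hp : 0 < p) (hq : 0 < q) (ha : 0 < a) :
    ∫⁻ t in Ioo 0 a, ENNReal.ofReal (t ^ (p - 1) * (a - t) ^ (q - 1)) =
      ENNReal.ofReal (a ^ (p + q - 1) * beta p q) := by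
  have hI : ∫ t in Ioo 0 a, t ^ (p - 1) * (a - t) ^ (q - 1) = a ^ (p + q - 1) * beta p q := by
    rw [← integral_Ioc_eq_integral_Ioo, ← intervalIntegral.integral_of_le ha.le,
      intervalIntegral_rpow_mul_rpow_sub hp hq ha]
  have hnonneg : 0 ≤ᵐ[volume.restrict (Ioo 0 a)] fun t => t ^ (p - 1) * (a - t) ^ (q - 1) :=
    ae_restrict_of_forall_mem measurableSet_Ioo fun t ht =>
      mul_nonneg (Real.rpow_nonneg ht.1.le _) (Real.rpow_nonneg (sub_nonneg.2 ht.2.le) _)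
  have hint : IntegrableOn (fun t => t ^ (p - 1) * (a - t) ^ (q - 1)) (Ioo 0 a) :=
    Integrable.of_integral_ne_zero <| by
      rw [hI]; exact (mul_pos (Real.rpow_pos_of_pos ha _) (beta_pos hp hq)).ne'
  rw [← ofReal_integral_eq_lintegral_ofReal hint hnonneg, hI]

theorem lintegral_pi_fin_succ_cons {E : Type*} [MeasurableSpace E] (μ : Measure E)
    [SigmaFinite μ] {n : ℕ} {f : (Fin (n + 1) → E) → ℝ≥0∞} (hf : Measurable f) :
    ∫⁻ x, f x ∂Measure.pi (fun _ => μ) =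
      ∫⁻ t, ∫⁻ y, f (Fin.cons t y) ∂Measure.pi (fun _ => μ) ∂μ := by
  let e := MeasurableEquiv.piFinSuccAbove (fun _ : Fin (n + 1) => E) 0
  rw [← (measurePreserving_piFinSuccAbove (fun _ => μ) 0).symm.lintegral_comp hf]
  refine (lintegral_prod (f ∘ e.symm) (hf.comp e.symm.measurable).aemeasurable).trans ?_
  simp [e, MeasurableEquiv.piFinSuccAbove_symm_apply, Fin.insertNthEquiv, Fin.insertNth_zero']

theorem measurableSet_solidSimplex (n : ℕ) (a : ℝ) : MeasurableSet (solidSimplex n a) := by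
  simp only [solidSimplex, ofPred_and, ofPred_forall]
  exact (MeasurableSet.iInter fun i =>
      measurableSet_le measurable_const (measurable_pi_apply i)).inter
    (measurableSet_le (by fun_prop) measurable_const)

theorem cons_mem_solidSimplex_iff {n : ℕ} {a t : ℝ} {y : Fin n → ℝ} :
    Fin.cons t y ∈ solidSimplex (n + 1) a ↔ 0 ≤ t ∧ y ∈ solidSimplex n (a - t) := by
  simp only [solidSimplex, mem_ofPred_eq, Fin.forall_fin_succ, Fin.cons_zero, Fin.cons_succ,
    Fin.sum_cons, le_sub_iff_add_le', and_assoc]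

theorem nonneg_of_mem_solidSimplex {n : ℕ} {a : ℝ} {x : Fin n → ℝ} (hx : x ∈ solidSimplex n a) :
    0 ≤ a :=
  (Finset.sum_nonneg fun i _ => hx.1 i).trans hx.2

theorem measurable_dirichletDensity {n : ℕ} (a : ℝ) (α : Fin (n + 1) → ℝ) :
    Measurable (dirichletDensity a α) := by
  unfold dirichletDensity
  fun_prop

theorem dirichletDensity_nonneg {n : ℕ} {a : ℝ} (α : Fin (n + 1) → ℝ) {x : Fin n → ℝ}
    (hx : x ∈ solidSimplex n a) : 0 ≤ dirichletDensity a α x :=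
  mul_nonneg (Finset.prod_nonneg fun i _ => Real.rpow_nonneg (hx.1 i) _)
    (Real.rpow_nonneg (sub_nonneg.2 hx.2) _)

theorem dirichletDensity_cons {n : ℕ} (a t : ℝ) (α : Fin (n + 2) → ℝ) (y : Fin n → ℝ) :
    dirichletDensity a α (Fin.cons t y) =
      t ^ (α 0 - 1) * dirichletDensity (a - t) (Fin.tail α) y := by
  simp only [dirichletDensity, Fin.prod_univ_succ, Fin.sum_cons, Fin.cons_zero, Fin.cons_succ,
    Fin.castSucc_zero, Fin.tail, Fin.succ_castSucc, Fin.succ_last, sub_add_eq_sub_sub, mul_assoc]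

theorem lintegral_indicator_solidSimplex_cons {n : ℕ} {a t : ℝ} (ht : 0 ≤ t)
    (α : Fin (n + 2) → ℝ) :
    ∫⁻ y, (solidSimplex (n + 1) a).indicator
        (fun x => ENNReal.ofReal (dirichletDensity a α x)) (Fin.cons t y) =
      ENNReal.ofReal (t ^ (α 0 - 1)) *
        ∫⁻ y in solidSimplex n (a - t),
          ENNReal.ofReal (dirichletDensity (a - t) (Fin.tail α) y) := by
  rw [← lintegral_indicator (measurableSet_solidSimplex n (a - t)), ← lintegral_const_mul]
  · congr 1 with y
    by_cases hy : y ∈ solidSimplex n (a - t)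
    · rw [indicator_of_mem (cons_mem_solidSimplex_iff.2 ⟨ht, hy⟩), indicator_of_mem hy,
        dirichletDensity_cons, ENNReal.ofReal_mul (Real.rpow_nonneg ht _)]
    · rw [indicator_of_notMem (fun h => hy (cons_mem_solidSimplex_iff.1 h).2),
        indicator_of_notMem hy, mul_zero]
  · exact (measurable_dirichletDensity _ _).ennreal_ofReal.indicator
      (measurableSet_solidSimplex n (a - t))

theorem support_lintegral_indicator_solidSimplex_cons_subset {n : ℕ} {a : ℝ}
    (f : (Fin (n + 1) → ℝ) → ℝ≥0∞) :
    (fun t => ∫⁻ y, (solidSimplex (n + 1) a).indicator f (Fin.cons t y)).support ⊆ Icc 0 a := by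
  intro t ht
  obtain ⟨y, hy⟩ : ∃ y, (solidSimplex (n + 1) a).indicator f (Fin.cons t y) ≠ 0 := by
    by_contra! h
    exact ht (by simp [h])
  obtain ⟨ht0, hy⟩ := cons_mem_solidSimplex_iff.1 (mem_of_indicator_ne_zero hy)
  exact ⟨ht0, sub_nonneg.1 (nonneg_of_mem_solidSimplex hy)⟩

theorem lintegral_dirichletDensity (n : ℕ) {a : ℝ} (ha : 0 < a) {α : Fin (n + 1) → ℝ}
    (hα : ∀ i, 0 < α i) :
    ∫⁻ x in solidSimplex n a, ENNReal.ofReal (dirichletDensity a α x) =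
      ENNReal.ofReal (a ^ ((∑ i, α i) - 1) * (∏ i, Real.Gamma (α i)) / Real.Gamma (∑ i, α i)) := by
  induction n generalizing a with
  | zero =>
    have hS : solidSimplex 0 a = univ := by
      ext x; simp [solidSimplex, ha.le]
    simp [hS, dirichletDensity, volume_pi, (Real.Gamma_pos_of_pos (hα 0)).ne']
  | succ n ih =>
    set p := α 0
    set q := ∑ j, Fin.tail α j
    set G := (∏ j, Real.Gamma (Fin.tail α j)) / Real.Gamma q
    have hq : 0 < q := Finset.sum_pos (fun j _ => hα j.succ) Finset.univ_nonempty
    set F := (solidSimplex (n + 1) a).indicator fun x => ENNReal.ofReal (dirichletDensity a α x)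
    have hF : Measurable F := (measurable_dirichletDensity _ _).ennreal_ofReal.indicator
      (measurableSet_solidSimplex _ _)
    have hinner : EqOn (fun t => ∫⁻ y, F (Fin.cons t y))
        (fun t => ENNReal.ofReal (t ^ (p - 1) * (a - t) ^ (q - 1)) * ENNReal.ofReal G)
        (Ioo 0 a) := by
      intro t ⟨ht0, hta⟩
      dsimp only [F]
      rw [lintegral_indicator_solidSimplex_cons ht0.le,
        ih (α := Fin.tail α) (sub_pos.2 hta) fun j => hα j.succ,
        ← ENNReal.ofReal_mul (Real.rpow_nonneg ht0.le _), ← ENNReal.ofReal_mul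
          (mul_nonneg (Real.rpow_nonneg ht0.le _) (Real.rpow_nonneg (sub_pos.2 hta).le _))]
      congr 1
      ring
    calc ∫⁻ x in solidSimplex (n + 1) a, ENNReal.ofReal (dirichletDensity a α x)
        = ∫⁻ t, ∫⁻ y, F (Fin.cons t y) := by
          rw [← lintegral_indicator (measurableSet_solidSimplex _ _)]
          exact lintegral_pi_fin_succ_cons volume hF
      _ = ∫⁻ t in Ioo 0 a, ∫⁻ y, F (Fin.cons t y) := by
          rw [setLIntegral_congr Ioo_ae_eq_Icc, setLIntegral_eq_of_support_subset
            (support_lintegral_indicator_solidSimplex_cons_subset _)]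
      _ = ENNReal.ofReal (a ^ (p + q - 1) * beta p q) * ENNReal.ofReal G := by
          rw [setLIntegral_congr_fun measurableSet_Ioo hinner, lintegral_mul_const _ (by fun_prop),
            setLIntegral_Ioo_rpow_mul_rpow_sub (hα 0) hq ha]
      _ = _ := by
          rw [← ENNReal.ofReal_mul (mul_nonneg (Real.rpow_nonneg ha.le _)
            (beta_pos (hα 0) hq).le), Fin.sum_univ_succ, Fin.prod_univ_succ]
          congr 1
          have hΓq := (Real.Gamma_pos_of_pos hq).ne'
          simp only [G, beta, p, q, Fin.tail] at hΓq ⊢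
          field_simp

theorem stmt_14 (n : ℕ) (a : ℝ) (ha : 0 < a) (α : Fin (n + 1) → ℝ) (hα : ∀ i, 0 < α i) :
    (∫ x in {x : Fin n → ℝ | (∀ i, 0 ≤ x i) ∧ ∑ i, x i ≤ a},
        (∏ i : Fin n, x i ^ (α i.castSucc - 1)) * (a - ∑ i, x i) ^ (α (Fin.last n) - 1)) =
    a ^ ((∑ i, α i) - 1) * (∏ i, Real.Gamma (α i)) / Real.Gamma (∑ i, α i) := by
  change ∫ x in solidSimplex n a, dirichletDensity a α x = _
  have hnonneg : 0 ≤ᵐ[volume.restrict (solidSimplex n a)] dirichletDensity a α :=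
    ae_restrict_of_forall_mem (measurableSet_solidSimplex n a) fun _ hx =>
      dirichletDensity_nonneg α hx
  have hconst : 0 ≤ a ^ ((∑ i, α i) - 1) * (∏ i, Real.Gamma (α i)) / Real.Gamma (∑ i, α i) :=
    div_nonneg (mul_nonneg (Real.rpow_nonneg ha.le _)
        (Finset.prod_nonneg fun i _ => Real.Gamma_nonneg_of_nonneg (hα i).le))
      (Real.Gamma_nonneg_of_nonneg (Finset.sum_nonneg fun i _ => (hα i).le))
  rw [integral_eq_lintegral_of_nonneg_ae hnonneg
      (measurable_dirichletDensity a α).aestronglyMeasurable,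
    lintegral_dirichletDensity n ha hα, ENNReal.toReal_ofReal hconst]
end

section
/- Let m ≥ 2 and define E(m) := (1/m)·∑_{k=2}^{m−1} (−1)ᵏ C(m−1,k)/m^{(k)} where m^{(k)} is the rising factorial. Then E(m) = e^{-1}/m − 1/m² + O(1/m³) as m → ∞; more precisely, |E(m) − e^{-1}/m + 1/m²| ≤ C/m³ for some absolute constant C and all m ≥ 2. -/
/-! Write `P_k(m) = (m-1)(m-2)⋯(m-k) / (m(m+1)⋯(m+k-1))`, so that
`C(m-1,k) / m^{(k)} = P_k(m) / k!` and `m E(m) + 1/m = ∑_{k<m} (-1)^k P_k(m) / k!`.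
Since `P_k(m) = 1 - k²/m + O(k⁴/m²)` and `k⁴/k!` decays geometrically, this sum is
`∑_{k<m} (-1)^k/k! - (1/m) ∑_{k<m} (-1)^k k²/k! + O(1/m²)`. The first partial sum is
`e⁻¹ + O(1/m²)`, and the second telescopes to `-(-1)^m/(m-2)!` because
`k²/k! = 1/(k-2)! + 1/(k-1)!`. -/

open Finset

noncomputable def fallingRisingRatio (x : ℝ) (k : ℕ) : ℝ := ∏ j ∈ range k, (x - (j + 1)) / (x + j)

lemma choose_div_prod_add_eq {m k : ℕ} (hk : k < m) :
    ((m - 1).choose k : ℝ) / ∏ i ∈ range k, ((m : ℝ) + i) =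
      fallingRisingRatio m k / k.factorial := by
  have hdesc : ((m - 1).choose k : ℝ) * k.factorial = ∏ j ∈ range k, ((m : ℝ) - (j + 1)) := by
    rw [← Nat.cast_mul, mul_comm, ← Nat.descFactorial_eq_factorial_mul_choose,
      Nat.descFactorial_eq_prod_range, Nat.cast_prod]
    refine prod_congr rfl fun j hj => ?_
    rw [Nat.cast_sub (by grind), Nat.cast_sub (by omega)]
    push_cast
    ring
  rw [fallingRisingRatio, prod_div_distrib, ← hdesc]
  field_simp

lemma abs_fallingRisingRatio_sub_le {x : ℝ} (hx : 1 ≤ x) (k : ℕ) :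
    |fallingRisingRatio x k - (1 - k ^ 2 / x)| ≤ 2 * k ^ 4 / x ^ 2 := by
  induction k with
  | zero => simp [fallingRisingRatio]
  | succ k ih =>
    set q := (x - (k + 1)) / (x + k)
    have hxk : 0 < x + k := by positivity
    have hq : |q| ≤ 1 := by
      rw [abs_div, abs_of_pos hxk, div_le_one hxk, abs_le]
      constructor <;> linarith
    have hstep : fallingRisingRatio x (k + 1) - (1 - ((k + 1 : ℕ) : ℝ) ^ 2 / x) =
        (fallingRisingRatio x k - (1 - k ^ 2 / x)) * q +
          (2 * k + 1) * k * (k + 1) / (x * (x + k)) := by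
      rw [fallingRisingRatio, prod_range_succ, ← fallingRisingRatio]
      simp only [q]
      push_cast
      field_simp
      ring
    have hrem : (2 * k + 1) * k * (k + 1) / (x * (x + k)) ≤ (2 * k + 1) * k * (k + 1) / x ^ 2 := by
      gcongr
      nlinarith
    rw [hstep]
    calc _ ≤ |fallingRisingRatio x k - (1 - k ^ 2 / x)| * |q| +
          (2 * k + 1) * k * (k + 1) / x ^ 2 := by
          refine (abs_add_le _ _).trans (add_le_add (abs_mul _ _).le ?_)
          rwa [abs_of_nonneg (by positivity)]
      _ ≤ 2 * k ^ 4 / x ^ 2 * 1 + (2 * k + 1) * k * (k + 1) / x ^ 2 := by gcongr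
      _ ≤ 2 * ((k + 1 : ℕ) : ℝ) ^ 4 / x ^ 2 := by
        rw [mul_one, ← add_div]
        gcongr
        push_cast
        nlinarith [pow_nonneg (Nat.cast_nonneg (α := ℝ) k) 3]

lemma pow_four_mul_three_pow_le (k : ℕ) : k ^ 4 * 3 ^ k ≤ 54 * (2 ^ k * k.factorial) := by
  rcases lt_or_ge k 4 with h | h
  · interval_cases k <;> decide
  · induction k, h using Nat.le_induction with
    | base => decide
    | succ n hn ih =>
      have h1 : (4 * (n + 1)) ^ 4 ≤ (5 * n) ^ 4 := Nat.pow_le_pow_left (by omega) 4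
      have h2 : 5 * n ^ 4 ≤ (n + 1) * n ^ 4 := Nat.mul_le_mul_right _ (by omega)
      have h3 : (n + 1) ^ 4 * 3 ≤ 2 * (n + 1) * n ^ 4 := by nlinarith
      calc (n + 1) ^ 4 * 3 ^ (n + 1) = (n + 1) ^ 4 * 3 * 3 ^ n := by ring
        _ ≤ 2 * (n + 1) * n ^ 4 * 3 ^ n := by gcongr
        _ = 2 * (n + 1) * (n ^ 4 * 3 ^ n) := by ring
        _ ≤ 2 * (n + 1) * (54 * (2 ^ n * n.factorial)) := by gcongr
        _ = 54 * (2 ^ (n + 1) * (n + 1).factorial) := by rw [Nat.factorial_succ]; ring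

lemma pow_four_div_factorial_le (k : ℕ) : (k : ℝ) ^ 4 / k.factorial ≤ 54 * (2 / 3) ^ k := by
  have h : (k : ℝ) ^ 4 * 3 ^ k ≤ 54 * (2 ^ k * k.factorial) := by
    exact_mod_cast pow_four_mul_three_pow_le k
  rw [div_le_iff₀ (by positivity), div_pow, mul_assoc, div_mul_eq_mul_div, mul_div_assoc',
    le_div_iff₀ (by positivity)]
  exact h

lemma abs_sum_alternating_fallingRisingRatio_sub_le {x : ℝ} (hx : 1 ≤ x) (n : ℕ) :
    |∑ k ∈ range n, (-1 : ℝ) ^ k / k.factorial * (fallingRisingRatio x k - (1 - k ^ 2 / x))| ≤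
      324 / x ^ 2 := by
  have hterm (k : ℕ) :
      |(-1 : ℝ) ^ k / k.factorial * (fallingRisingRatio x k - (1 - k ^ 2 / x))| ≤
        108 / x ^ 2 * (2 / 3) ^ k :=
    calc _ = |fallingRisingRatio x k - (1 - k ^ 2 / x)| / (k.factorial : ℝ) := by
          rw [abs_mul, abs_div, abs_pow, abs_neg, abs_one, one_pow, Nat.abs_cast]; ring
      _ ≤ 2 * k ^ 4 / x ^ 2 / k.factorial := by gcongr; exact abs_fallingRisingRatio_sub_le hx k
      _ = 2 / x ^ 2 * (k ^ 4 / k.factorial) := by ring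
      _ ≤ 2 / x ^ 2 * (54 * (2 / 3) ^ k) := by gcongr; exact pow_four_div_factorial_le k
      _ = 108 / x ^ 2 * (2 / 3) ^ k := by ring
  have hgeom : ∑ k ∈ range n, (2 / 3 : ℝ) ^ k ≤ 3 := by
    rw [range_eq_Ico]
    refine (geom_sum_Ico_le_of_lt_one (by norm_num) (by norm_num)).trans ?_
    norm_num
  calc _ ≤ ∑ k ∈ range n, 108 / x ^ 2 * (2 / 3 : ℝ) ^ k :=
        (abs_sum_le_sum_abs _ _).trans (sum_le_sum fun k _ => hterm k)
    _ ≤ 108 / x ^ 2 * 3 := by rw [← mul_sum]; gcongr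
    _ = 324 / x ^ 2 := by ring

lemma abs_sum_alternating_inv_factorial_sub_exp_neg_one_le {n : ℕ} (hn : 0 < n) :
    |∑ k ∈ range n, (-1 : ℝ) ^ k / k.factorial - Real.exp (-1)| ≤ 4 / n ^ 2 := by
  have hfact : n * (n + 1) ≤ 4 * n.factorial := by
    obtain ⟨k, rfl⟩ : ∃ k, n = k + 1 := ⟨n - 1, by omega⟩
    have := Nat.self_le_factorial k
    have := k.factorial_pos
    rw [Nat.factorial_succ]
    nlinarith
  have hfactR : (n : ℝ) * (n + 1) ≤ 4 * n.factorial := by exact_mod_cast hfact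
  have hexp := Real.exp_bound (x := -1) (by norm_num) hn
  rw [abs_neg, abs_one, one_pow, one_mul, abs_sub_comm] at hexp
  refine hexp.trans ?_
  rw [div_le_div_iff₀ (by positivity) (by positivity)]
  push_cast
  nlinarith [mul_le_mul_of_nonneg_right hfactR (Nat.cast_nonneg (α := ℝ) n)]

lemma sum_alternating_inv_factorial_mul_sq (n : ℕ) :
    ∑ k ∈ range (n + 2), (-1 : ℝ) ^ k / k.factorial * (k : ℝ) ^ 2 =
      -((-1 : ℝ) ^ n / n.factorial) := by
  induction n with
  | zero => simp [sum_range_succ]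
  | succ n ih =>
    rw [sum_range_succ, ih, Nat.factorial_succ (n + 1), Nat.factorial_succ n]
    push_cast
    field_simp
    ring

lemma sum_Icc_two_pred_eq_sum_range_sub {M : Type*} [AddCommGroup M] (f : ℕ → M) {m : ℕ}
    (hm : 2 ≤ m) :
    ∑ k ∈ Icc 2 (m - 1), f k = ∑ k ∈ range m, f k - (f 0 + f 1) := by
  rw [show Icc 2 (m - 1) = Ico 2 m by grind, range_eq_Ico,
    ← sum_Ico_consecutive f (Nat.zero_le 2) hm]
  simp [sum_range_succ]

lemma sum_Icc_two_choose_div_prod_eq {m : ℕ} (hm : 2 ≤ m) :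
    ∑ k ∈ Icc 2 (m - 1), (-1 : ℝ) ^ k * ((m - 1).choose k) / ∏ i ∈ range k, ((m : ℝ) + i) =
      ∑ k ∈ range m, (-1 : ℝ) ^ k / k.factorial * fallingRisingRatio m k - 1 / m := by
  obtain ⟨n, rfl⟩ : ∃ n, m = n + 2 := ⟨m - 2, by omega⟩
  rw [sum_Icc_two_pred_eq_sum_range_sub _ hm]
  have hterms : ∑ k ∈ range (n + 2), (-1 : ℝ) ^ k * ((n + 2 - 1).choose k) /
      ∏ i ∈ range k, (((n + 2 : ℕ) : ℝ) + i) =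
        ∑ k ∈ range (n + 2), (-1 : ℝ) ^ k / k.factorial * fallingRisingRatio (n + 2 : ℕ) k := by
    refine sum_congr rfl fun k hk => ?_
    rw [mul_div_assoc, choose_div_prod_add_eq (mem_range.mp hk)]
    ring
  rw [hterms, sub_right_inj, pow_zero, pow_one, Nat.choose_zero_right, Nat.choose_one_right,
    prod_range_zero, prod_range_one]
  push_cast
  field_simp
  ring

lemma abs_sum_alternating_inv_factorial_mul_sq_le (n : ℕ) :
    |∑ k ∈ range (n + 2), (-1 : ℝ) ^ k / k.factorial * (k : ℝ) ^ 2| ≤ 6 / (n + 2 : ℕ) := by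
  rw [sum_alternating_inv_factorial_mul_sq, abs_neg, abs_div, abs_pow, abs_neg, abs_one,
    one_pow, Nat.abs_cast, div_le_div_iff₀ (by positivity) (by positivity)]
  have := Nat.self_le_factorial n
  have := n.factorial_pos
  have : n + 2 ≤ 6 * n.factorial := by omega
  rw [one_mul]
  exact_mod_cast this

lemma abs_sum_alternating_fallingRisingRatio_sub_exp_le {m : ℕ} (hm : 2 ≤ m) :
    |∑ k ∈ range m, (-1 : ℝ) ^ k / k.factorial * fallingRisingRatio m k - Real.exp (-1)| ≤
      334 / (m : ℝ) ^ 2 := by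
  obtain ⟨n, rfl⟩ : ∃ n, m = n + 2 := ⟨m - 2, by omega⟩
  set x : ℝ := ((n + 2 : ℕ) : ℝ)
  have hx : 1 ≤ x := by simp only [x]; push_cast; linarith
  have hdecomp : ∑ k ∈ range (n + 2), (-1 : ℝ) ^ k / k.factorial * fallingRisingRatio x k
      - Real.exp (-1) =
      ∑ k ∈ range (n + 2), (-1 : ℝ) ^ k / k.factorial * (fallingRisingRatio x k - (1 - k ^ 2 / x))
        + (∑ k ∈ range (n + 2), (-1 : ℝ) ^ k / k.factorial - Real.exp (-1))
        + -((∑ k ∈ range (n + 2), (-1 : ℝ) ^ k / k.factorial * (k : ℝ) ^ 2) / x) := by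
    simp only [mul_sub, mul_div_assoc', sum_sub_distrib, sum_div, mul_one]
    ring
  have hsq : |(∑ k ∈ range (n + 2), (-1 : ℝ) ^ k / k.factorial * (k : ℝ) ^ 2) / x| ≤ 6 / x ^ 2 := by
    rw [abs_div, abs_of_pos (by positivity : 0 < x), div_le_iff₀ (by positivity)]
    calc _ ≤ 6 / x := abs_sum_alternating_inv_factorial_mul_sq_le n
      _ = 6 / x ^ 2 * x := by field_simp
  rw [hdecomp]
  calc _ ≤ 324 / x ^ 2 + 4 / x ^ 2 + 6 / x ^ 2 := (abs_add_three _ _ _).trans <|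
        add_le_add (add_le_add (abs_sum_alternating_fallingRisingRatio_sub_le hx _)
          (abs_sum_alternating_inv_factorial_sub_exp_neg_one_le (by omega))) (by rwa [abs_neg])
    _ = 334 / x ^ 2 := by ring

theorem stmt_16 :
    ∃ C : ℝ, 0 < C ∧ ∀ m : ℕ, 2 ≤ m →
      |(1 / (m : ℝ)) * ∑ k ∈ Finset.Icc 2 (m - 1), (-1 : ℝ) ^ k * ((m - 1).choose k) /
          (∏ i ∈ Finset.range k, ((m : ℝ) + i))
        - Real.exp (-1) / m + 1 / (m : ℝ) ^ 2| ≤ C / (m : ℝ) ^ 3 := by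
  refine ⟨334, by norm_num, fun m hm => ?_⟩
  have hm0 : (0 : ℝ) < m := by positivity
  set S := ∑ k ∈ range m, (-1 : ℝ) ^ k / k.factorial * fallingRisingRatio m k
  -- the `k = 0, 1` terms missing from the original sum make the `1 / m²` cancel exactly
  have hcancel : 1 / (m : ℝ) * (S - 1 / m) - Real.exp (-1) / m + 1 / (m : ℝ) ^ 2 =
      (S - Real.exp (-1)) / m := by
    field_simp
    ring
  rw [sum_Icc_two_choose_div_prod_eq hm, hcancel, abs_div, abs_of_pos hm0, div_le_iff₀ hm0]
  calc _ ≤ 334 / (m : ℝ) ^ 2 := abs_sum_alternating_fallingRisingRatio_sub_exp_le hm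
    _ = 334 / (m : ℝ) ^ 3 * m := by field_simp
end

section
/- Let m = 3 and let (p₁,p₂,p₃) be uniformly distributed on the simplex {p ∈ (0,1)³ : p₁+p₂+p₃=1}. Let p⁽¹⁾ ≥ p⁽²⁾ ≥ p⁽³⁾ be the order statistics. Then E[(1/3)(p⁽¹⁾ − p⁽³⁾)(p⁽²⁾ − p⁽³⁾)] = 1/36. -/
/-
Writing `M ≥ m' ≥ m` for the sorted coordinates of `(x, y, 1 - x - y)`, the identity
`(M - m) (m' - m) = (xy + yz + zx) - 2m + 3m²` leaves the minimum `m` as the only non-polynomial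
part of the integrand. Integrating over the triangle by Fubini, the inner integral in `y` splits
into intervals on which a fixed coordinate is the smallest; it is a cubic in `x` on `[0, 1/3]`
and another on `[1/3, 1]`, and integrating these gives `1/36`.
-/

open MeasureTheory Set

theorem max_sub_min_mul_mid_sub_min (a b c : ℝ) :
    (max a (max b c) - min a (min b c)) *
        (a + b + c - max a (max b c) - min a (min b c) - min a (min b c)) =
      a * b + b * c + c * a - 2 * (a + b + c) * min a (min b c) +
        3 * min a (min b c) ^ 2 := by
  simp only [max_def, min_def]
  split_ifs <;> first | (exfalso; linarith) | ring

theorem integral_cubic (a b c₀ c₁ c₂ c₃ : ℝ) :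
    ∫ t in a..b, (c₀ + c₁ * t + c₂ * t ^ 2 + c₃ * t ^ 3) =
      (c₀ * b + c₁ / 2 * b ^ 2 + c₂ / 3 * b ^ 3 + c₃ / 4 * b ^ 4) -
        (c₀ * a + c₁ / 2 * a ^ 2 + c₂ / 3 * a ^ 3 + c₃ / 4 * a ^ 4) := by
  have hcont : Continuous fun t : ℝ => c₀ + c₁ * t + c₂ * t ^ 2 + c₃ * t ^ 3 := by
    fun_prop
  refine intervalIntegral.integral_eq_sub_of_hasDerivAt
    (f := fun t => c₀ * t + c₁ / 2 * t ^ 2 + c₂ / 3 * t ^ 3 + c₃ / 4 * t ^ 4)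
    (fun t _ => ?_) (hcont.intervalIntegrable a b)
  exact ((((hasDerivAt_id t).const_mul c₀).add
    ((hasDerivAt_pow 2 t).const_mul (c₁ / 2))).add
    ((hasDerivAt_pow 3 t).const_mul (c₂ / 3))).add ((hasDerivAt_pow 4 t).const_mul (c₃ / 4))
    |>.congr_deriv (by push_cast; ring)

theorem intervalIntegral.integral_eq_add_of_eqOn_Ioo {f p q : ℝ → ℝ} {a b c : ℝ}
    (hab : a ≤ b) (hbc : b ≤ c) (hp : Continuous p) (hq : Continuous q)
    (hfp : EqOn f p (Ioo a b)) (hfq : EqOn f q (Ioo b c)) :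
    ∫ x in a..c, f x = (∫ x in a..b, p x) + ∫ x in b..c, q x := by
  have hf₁ : IntervalIntegrable f volume a b :=
    (hp.intervalIntegrable a b).congr_uIoo (uIoo_of_le hab ▸ hfp.symm)
  have hf₂ : IntervalIntegrable f volume b c :=
    (hq.intervalIntegrable b c).congr_uIoo (uIoo_of_le hbc ▸ hfq.symm)
  rw [← intervalIntegral.integral_add_adjacent_intervals hf₁ hf₂,
    intervalIntegral.integral_congr_Ioo_of_le hab hfp,
    intervalIntegral.integral_congr_Ioo_of_le hbc hfq]

theorem setIntegral_regionBetween {f g : ℝ → ℝ} {s : Set ℝ} (hf : Measurable f)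
    (hg : Measurable g) (hs : MeasurableSet s) {F : ℝ × ℝ → ℝ}
    (hF : IntegrableOn F (regionBetween f g s)) :
    ∫ p in regionBetween f g s, F p = ∫ x in s, ∫ y in Ioo (f x) (g x), F (x, y) := by
  have hm := measurableSet_regionBetween hf hg hs
  rw [Measure.volume_eq_prod] at hF ⊢
  rw [← integral_indicator hm, integral_prod _ ((integrable_indicator_iff hm).2 hF),
    ← integral_indicator hs]
  congr 1; ext x
  by_cases hx : x ∈ s
  · rw [indicator_of_mem hx, ← integral_indicator measurableSet_Ioo]
    congr 1; ext y
    classical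
    simp [indicator_apply, regionBetween, hx]
  · simp [regionBetween, hx]

theorem triangle_eq_regionBetween :
    {p : ℝ × ℝ | 0 < p.1 ∧ 0 < p.2 ∧ p.1 + p.2 < 1} =
      regionBetween (fun _ => 0) (fun x => 1 - x) (Ioo 0 1) := by
  ext ⟨x, y⟩
  simp only [regionBetween, mem_Ioo]
  constructor
  · rintro ⟨hx, hy, hxy⟩; exact ⟨⟨hx, by linarith⟩, hy, by linarith⟩
  · rintro ⟨⟨hx, -⟩, hy, hxy⟩; exact ⟨hx, hy, by linarith⟩

theorem setIntegral_triangle {F : ℝ × ℝ → ℝ} (hF : Continuous F) :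
    ∫ p in {p : ℝ × ℝ | 0 < p.1 ∧ 0 < p.2 ∧ p.1 + p.2 < 1}, F p =
      ∫ x in (0 : ℝ)..1, ∫ y in (0 : ℝ)..(1 - x), F (x, y) := by
  have hsub :
      {p : ℝ × ℝ | 0 < p.1 ∧ 0 < p.2 ∧ p.1 + p.2 < 1} ⊆ Icc 0 1 ×ˢ Icc 0 1 := by
    rintro ⟨x, y⟩ ⟨hx, hy, hxy⟩
    exact ⟨⟨hx.le, by linarith⟩, ⟨hy.le, by linarith⟩⟩
  have hint := (hF.continuousOn.integrableOn_compact (μ := volume)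
    (isCompact_Icc.prod isCompact_Icc)).mono_set hsub
  rw [triangle_eq_regionBetween] at hint ⊢
  rw [setIntegral_regionBetween measurable_const (by fun_prop) measurableSet_Ioo hint,
    intervalIntegral.integral_of_le zero_le_one, ← integral_Ioc_eq_integral_Ioo]
  refine setIntegral_congr_fun measurableSet_Ioc fun x hx => ?_
  rw [intervalIntegral.integral_of_le (by linarith [hx.2]), integral_Ioc_eq_integral_Ioo]

noncomputable def integrand (x y : ℝ) : ℝ :=
  2 / 3 * (x * y + y * (1 - x - y) + (1 - x - y) * x) - 4 / 3 * min x (min y (1 - x - y)) +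
    2 * min x (min y (1 - x - y)) ^ 2

theorem integrand_eq (x y : ℝ) :
    integrand x y = 2 * (1 / 3 * ((max x (max y (1 - x - y)) - min x (min y (1 - x - y))) *
      ((1 - max x (max y (1 - x - y)) - min x (min y (1 - x - y))) -
        min x (min y (1 - x - y))))) := by
  have h := max_sub_min_mul_mid_sub_min x y (1 - x - y)
  rw [show x + y + (1 - x - y) = 1 by ring] at h
  rw [h, integrand]; ring

theorem continuous_integrand : Continuous fun p : ℝ × ℝ => integrand p.1 p.2 := by
  unfold integrand; fun_prop

-- The polynomials below are written in the shape expected by `integral_cubic`.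
theorem integrand_eq_of_y_min {x y : ℝ} (hx : y ≤ x) (hz : y ≤ 1 - x - y) :
    integrand x y =
      2 / 3 * x - 2 / 3 * x ^ 2 + (-2 / 3 - 2 / 3 * x) * y + 4 / 3 * y ^ 2 + 0 * y ^ 3 := by
  rw [integrand, min_eq_left hz, min_eq_right hx]; ring

theorem integrand_eq_of_x_min {x y : ℝ} (hy : x ≤ y) (hz : x ≤ 1 - x - y) :
    integrand x y =
      -2 / 3 * x + 4 / 3 * x ^ 2 + (2 / 3 - 2 / 3 * x) * y + (-2 / 3) * y ^ 2 + 0 * y ^ 3 := by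
  rw [integrand, min_eq_left (le_min hy hz)]; ring

theorem integrand_eq_of_z_min {x y : ℝ} (hx : 1 - x - y ≤ x) (hy : 1 - x - y ≤ y) :
    integrand x y =
      2 / 3 - 2 * x + 4 / 3 * x ^ 2 + (-2 + 10 / 3 * x) * y + 4 / 3 * y ^ 2 + 0 * y ^ 3 := by
  rw [integrand, min_eq_right hy, min_eq_right hx]; ring

theorem intervalIntegrable_integrand (x a b : ℝ) :
    IntervalIntegrable (integrand x) volume a b :=
  (continuous_integrand.comp (Continuous.prodMk_right x)).intervalIntegrable a b

theorem integral_integrand_of_le_third {x : ℝ} (hx₀ : 0 ≤ x) (hx : x ≤ 1 / 3) :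
    ∫ y in (0 : ℝ)..(1 - x), integrand x y =
      1 / 9 + (-1) * x + 11 / 3 * x ^ 2 + (-37 / 9) * x ^ 3 := by
  rw [← intervalIntegral.integral_add_adjacent_intervals
      (intervalIntegrable_integrand x 0 (1 - 2 * x)) (intervalIntegrable_integrand x _ (1 - x)),
    ← intervalIntegral.integral_add_adjacent_intervals (intervalIntegrable_integrand x 0 x)
      (intervalIntegrable_integrand x x _),
    intervalIntegral.integral_congr_Ioo_of_le hx₀ fun y hy =>
      integrand_eq_of_y_min hy.2.le (by linarith [hy.2]),
    intervalIntegral.integral_congr_Ioo_of_le (by linarith : x ≤ 1 - 2 * x) fun y hy =>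
      integrand_eq_of_x_min hy.1.le (by linarith [hy.2]),
    intervalIntegral.integral_congr_Ioo_of_le (by linarith : 1 - 2 * x ≤ 1 - x) fun y hy =>
      integrand_eq_of_z_min (by linarith [hy.1]) (by linarith [hy.1]),
    integral_cubic, integral_cubic, integral_cubic]
  ring

theorem integral_integrand_of_third_le {x : ℝ} (hx₀ : 1 / 3 ≤ x) (hx : x ≤ 1) :
    ∫ y in (0 : ℝ)..(1 - x), integrand x y =
      -1 / 18 + 1 / 2 * x + (-5 / 6) * x ^ 2 + 7 / 18 * x ^ 3 := by
  rw [← intervalIntegral.integral_add_adjacent_intervals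
      (intervalIntegrable_integrand x 0 ((1 - x) / 2)) (intervalIntegrable_integrand x _ (1 - x)),
    intervalIntegral.integral_congr_Ioo_of_le (by linarith : 0 ≤ (1 - x) / 2) fun y hy =>
      integrand_eq_of_y_min (by linarith [hy.2]) (by linarith [hy.2]),
    intervalIntegral.integral_congr_Ioo_of_le (by linarith : (1 - x) / 2 ≤ 1 - x) fun y hy =>
      integrand_eq_of_z_min (by linarith [hy.1]) (by linarith [hy.1]),
    integral_cubic, integral_cubic]
  ring

theorem stmt_17 :
    (∫ p in {p : ℝ × ℝ | 0 < p.1 ∧ 0 < p.2 ∧ p.1 + p.2 < 1},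
        (2 : ℝ) * ((1 / 3) *
          ((max p.1 (max p.2 (1 - p.1 - p.2)) - min p.1 (min p.2 (1 - p.1 - p.2))) *
           ((1 - max p.1 (max p.2 (1 - p.1 - p.2)) - min p.1 (min p.2 (1 - p.1 - p.2))) -
             min p.1 (min p.2 (1 - p.1 - p.2)))))) = 1 / 36 := by
  simp_rw [← integrand_eq]
  rw [setIntegral_triangle continuous_integrand,
    intervalIntegral.integral_eq_add_of_eqOn_Ioo (b := 1 / 3)
      (by norm_num) (by norm_num) (by fun_prop) (by fun_prop)
      (fun x hx => integral_integrand_of_le_third hx.1.le hx.2.le)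
      (fun x hx => integral_integrand_of_third_le hx.1.le hx.2.le), integral_cubic, integral_cubic]
  norm_num
end
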